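/- Let A ∈ (ℝ ∪ {−∞})^{n×n} have spectral radius λ > −∞, let q ∈ ℝⁿ be a regular vector, let p ∈ (ℝ ∪ {−∞})ⁿ, and let c ∈ ℝ ∪ {−∞}. Set μ = λ ⊕ ⊕_{m=1}^{n} (q⁻ A^{m−1} p)^{1/(m+1)} ⊕ c. Then the minimum of x⁻ A x ⊕ x⁻ p ⊕ q⁻ x ⊕ c over all regular vectors x ∈ ℝⁿ equals μ, and a regular vector x attains this minimum if and only if x = (μ⁻¹ A)* u for some vector u with μ⁻¹ p ≤ u ≤ μ (q⁻ (μ⁻¹ A)*)⁻, where μ⁻¹ = −μ. -/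

import Mathlib

open Finset

noncomputable section

namespace MaxPlus

/-- Max-plus multiplicative inverse: `-a` for real `a`, `⊥` for `⊥`. -/
def tinv (a : WithBot ℝ) : WithBot ℝ := WithBot.map (fun r => -r) a

/-- Max-plus rational power `a^(1/k) = a / k`. -/
def trt (a : WithBot ℝ) (k : ℕ) : WithBot ℝ := WithBot.map (fun r => r / (k : ℝ)) a

/-- A vector is regular if it has no `⊥` (= -∞) entries. -/
def Reg {n : ℕ} (x : Fin n → WithBot ℝ) : Prop := ∀ i, x i ≠ ⊥

/-- `cdot q x = q⁻ x`, the max-plus product of the conjugate row vector `q⁻` with `x`. -/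
def cdot {n : ℕ} (q x : Fin n → WithBot ℝ) : WithBot ℝ :=
  Finset.univ.sup fun i => tinv (q i) + x i

/-- Max-plus matrix-vector product. -/
def mulVec {m n : ℕ} (A : Matrix (Fin m) (Fin n) (WithBot ℝ)) (x : Fin n → WithBot ℝ) :
    Fin m → WithBot ℝ := fun i => Finset.univ.sup fun j => A i j + x j

/-- Max-plus matrix product. -/
def tmul {l m n : ℕ} (A : Matrix (Fin l) (Fin m) (WithBot ℝ))
    (B : Matrix (Fin m) (Fin n) (WithBot ℝ)) : Matrix (Fin l) (Fin n) (WithBot ℝ) :=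
  fun i j => Finset.univ.sup fun k => A i k + B k j

/-- Multiplicative conjugate transpose of a matrix. -/
def conjM {m n : ℕ} (A : Matrix (Fin m) (Fin n) (WithBot ℝ)) :
    Matrix (Fin n) (Fin m) (WithBot ℝ) := fun i j => tinv (A j i)

/-- Max-plus identity matrix. -/
def tId {n : ℕ} : Matrix (Fin n) (Fin n) (WithBot ℝ) := fun i j => if i = j then 0 else ⊥

/-- Max-plus matrix power. -/
def tpow {n : ℕ} (A : Matrix (Fin n) (Fin n) (WithBot ℝ)) : ℕ → Matrix (Fin n) (Fin n) (WithBot ℝ)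
  | 0 => tId
  | k + 1 => tmul A (tpow A k)

/-- Max-plus trace. -/
def ttr {n : ℕ} (A : Matrix (Fin n) (Fin n) (WithBot ℝ)) : WithBot ℝ :=
  Finset.univ.sup fun i => A i i

/-- `Tr(A) = tr A ⊕ tr A² ⊕ ⋯ ⊕ tr Aⁿ`. -/
def TrOp {n : ℕ} (A : Matrix (Fin n) (Fin n) (WithBot ℝ)) : WithBot ℝ :=
  (Finset.Icc 1 n).sup fun m => ttr (tpow A m)

/-- Kleene star `A* = I ⊕ A ⊕ ⋯ ⊕ A^(n-1)`. -/
def kstar {n : ℕ} (A : Matrix (Fin n) (Fin n) (WithBot ℝ)) : Matrix (Fin n) (Fin n) (WithBot ℝ) :=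
  fun i j => (Finset.range n).sup fun k => tpow A k i j

/-- Max-plus spectral radius `λ = ⊕_{m=1}^n (tr A^m)^(1/m)`. -/
def specRad {n : ℕ} (A : Matrix (Fin n) (Fin n) (WithBot ℝ)) : WithBot ℝ :=
  (Finset.Icc 1 n).sup fun m => trt (ttr (tpow A m)) m

/-- `prodAB A B [i₁, …, i_k] = A B^{i₁} A B^{i₂} ⋯ A B^{i_k}`. -/
def prodAB {n : ℕ} (A B : Matrix (Fin n) (Fin n) (WithBot ℝ)) :
    List ℕ → Matrix (Fin n) (Fin n) (WithBot ℝ)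
  | [] => tId
  | i :: t => tmul (tmul A (tpow B i)) (prodAB A B t)

/-- The all-ones (all-`𝟙 = 0`) vector. -/
def onesV (n : ℕ) : Fin n → WithBot ℝ := fun _ => 0

end MaxPlus

open MaxPlus

/-
For regular `x`, the inequality `y ≤ (x⁻ y) ⊗ x` (inserting `x x⁻ ≥ I`) gives
`tr Aᵐ ≤ (x⁻ A x)ᵐ` and `q⁻ Aᵐ⁻¹ p ≤ (q⁻ x) (x⁻ A x)ᵐ⁻¹ (x⁻ p)`, so every term of `μ` is bounded by
the objective `θ(x)` and `θ(x) ≥ μ`.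

Conversely, `θ(x) ≤ μ` says `μ⁻¹ A x ≤ x`, `μ⁻¹ p ≤ x` and `q⁻ x ≤ μ`. As `λ ≤ μ`, every cycle of
`B = μ⁻¹ A` has nonpositive weight, so a walk of length `n`, which must revisit a vertex, is
dominated by a shorter one: `Bⁿ ≤ B*`, hence `B B* ≤ B*`. Therefore the solutions of `B x ≤ x` are
exactly the vectors `x = B* u`, and the two other inequalities become the bounds on `u`. Finally
the terms `(q⁻ Aᵐ⁻¹ p)^(1/(m+1)) ≤ μ` make `u = μ (q⁻ B*)⁻` admissible, so `μ` is attained.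
-/

namespace MaxPlus

lemma add_finsetSup {ι : Type*} (a : WithBot ℝ) (s : Finset ι) (f : ι → WithBot ℝ) :
    a + s.sup f = s.sup fun i => a + f i :=
  Finset.apply_sup_eq_sup_comp_of_linearOrder (a + ·) (fun _ _ h => add_le_add_right h a)
    (WithBot.add_bot a)

lemma finsetSup_add {ι : Type*} (s : Finset ι) (f : ι → WithBot ℝ) (a : WithBot ℝ) :
    s.sup f + a = s.sup fun i => f i + a := by
  simp only [add_comm _ a, add_finsetSup]

lemma tinv_add_cancel {a : WithBot ℝ} (ha : a ≠ ⊥) : tinv a + a = 0 := by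
  lift a to ℝ using ha
  exact WithBot.coe_eq_zero.2 (neg_add_cancel a)

lemma add_tinv_cancel {a : WithBot ℝ} (ha : a ≠ ⊥) : a + tinv a = 0 := by
  rw [add_comm, tinv_add_cancel ha]

lemma tinv_ne_bot {a : WithBot ℝ} (ha : a ≠ ⊥) : tinv a ≠ ⊥ := by
  lift a to ℝ using ha
  exact WithBot.coe_ne_bot

lemma tinv_add_le_iff {a b c : WithBot ℝ} (ha : a ≠ ⊥) : tinv a + b ≤ c ↔ b ≤ a + c := by
  constructor <;> intro h
  · simpa [← add_assoc, add_tinv_cancel ha] using add_le_add_right h a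
  · simpa [← add_assoc, tinv_add_cancel ha] using add_le_add_right h (tinv a)

lemma le_tinv_add_iff {a b c : WithBot ℝ} (ha : a ≠ ⊥) : b ≤ tinv a + c ↔ a + b ≤ c := by
  constructor <;> intro h
  · simpa [← add_assoc, add_tinv_cancel ha] using add_le_add_right h a
  · simpa [← add_assoc, tinv_add_cancel ha] using add_le_add_right h (tinv a)

lemma trt_le_iff {a b : WithBot ℝ} {m : ℕ} (hm : 0 < m) : trt a m ≤ b ↔ a ≤ m • b := by
  induction a using WithBot.recBotCoe with
  | bot => simp [trt]
  | coe r =>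
    induction b using WithBot.recBotCoe with
    | bot =>
      obtain ⟨k, rfl⟩ := Nat.exists_eq_add_of_lt hm
      simp [trt, succ_nsmul]
    | coe s =>
      rw [← WithBot.coe_nsmul, trt, WithBot.map_coe, WithBot.coe_le_coe, WithBot.coe_le_coe,
        div_le_iff₀ (by exact_mod_cast hm), nsmul_eq_mul, mul_comm]

variable {n : ℕ}

lemma add_le_mulVec {m k : ℕ} (A : Matrix (Fin m) (Fin k) (WithBot ℝ)) (x : Fin k → WithBot ℝ)
    (i : Fin m) (j : Fin k) : A i j + x j ≤ mulVec A x i :=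
  Finset.le_sup (f := fun j => A i j + x j) (Finset.mem_univ j)

lemma mulVec_tmul {l m k : ℕ} (A : Matrix (Fin l) (Fin m) (WithBot ℝ))
    (B : Matrix (Fin m) (Fin k) (WithBot ℝ)) (x : Fin k → WithBot ℝ) :
    mulVec (tmul A B) x = mulVec A (mulVec B x) := by
  funext i
  simp only [mulVec, tmul, finsetSup_add, add_finsetSup, add_assoc]
  exact Finset.sup_comm _ _ _

lemma mulVec_tId (x : Fin n → WithBot ℝ) : mulVec tId x = x := by
  funext i
  refine le_antisymm (Finset.sup_le fun j _ => ?_) ?_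
  · by_cases h : i = j
    · subst h; simp [tId]
    · simp [tId, h]
  · simpa [tId] using add_le_mulVec tId x i i

lemma mulVec_tpow_succ (A : Matrix (Fin n) (Fin n) (WithBot ℝ)) (k : ℕ) (x : Fin n → WithBot ℝ) :
    mulVec (tpow A (k + 1)) x = mulVec A (mulVec (tpow A k) x) :=
  mulVec_tmul A (tpow A k) x

lemma mulVec_mono {m k : ℕ} (A : Matrix (Fin m) (Fin k) (WithBot ℝ)) {x y : Fin k → WithBot ℝ}
    (h : ∀ j, x j ≤ y j) (i : Fin m) : mulVec A x i ≤ mulVec A y i :=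
  Finset.sup_mono_fun fun j _ => add_le_add_right (h j) _

lemma mulVec_mono_left {m k : ℕ} {M N : Matrix (Fin m) (Fin k) (WithBot ℝ)}
    (h : ∀ i j, M i j ≤ N i j) (x : Fin k → WithBot ℝ) (i : Fin m) : mulVec M x i ≤ mulVec N x i :=
  Finset.sup_mono_fun fun j _ => add_le_add_left (h i j) _

lemma le_cdot (q x : Fin n → WithBot ℝ) (i : Fin n) : tinv (q i) + x i ≤ cdot q x :=
  Finset.le_sup (f := fun i => tinv (q i) + x i) (Finset.mem_univ i)

lemma cdot_le_iff {q x : Fin n → WithBot ℝ} {b : WithBot ℝ} :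
    cdot q x ≤ b ↔ ∀ i, tinv (q i) + x i ≤ b := by
  simp [cdot]

lemma cdot_le_iff_tinv_add_le {x y : Fin n → WithBot ℝ} (hx : Reg x) {μ : WithBot ℝ}
    (hμ : μ ≠ ⊥) : cdot x y ≤ μ ↔ ∀ i, tinv μ + y i ≤ x i := by
  refine cdot_le_iff.trans (forall_congr' fun i => ?_)
  rw [tinv_add_le_iff (hx i), tinv_add_le_iff hμ, add_comm]

lemma cdot_self_le {x : Fin n → WithBot ℝ} (hx : Reg x) : cdot x x ≤ 0 :=
  cdot_le_iff.2 fun i => (tinv_add_cancel (hx i)).le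

lemma le_add_cdot {x : Fin n → WithBot ℝ} (hx : Reg x) (y : Fin n → WithBot ℝ) (j : Fin n) :
    y j ≤ x j + cdot x y :=
  (tinv_add_le_iff (hx j)).1 (le_cdot x y j)

lemma cdot_add_const (q x : Fin n → WithBot ℝ) (a : WithBot ℝ) :
    cdot q (fun j => x j + a) = cdot q x + a := by
  simp only [cdot, finsetSup_add, add_assoc]

lemma mulVec_add_const {m k : ℕ} (A : Matrix (Fin m) (Fin k) (WithBot ℝ))
    (x : Fin k → WithBot ℝ) (a : WithBot ℝ) (i : Fin m) :
    mulVec A (fun j => x j + a) i = mulVec A x i + a := by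
  simp only [mulVec, finsetSup_add, add_assoc]

lemma cdot_le_cdot_add {x : Fin n → WithBot ℝ} (hx : Reg x) (q y : Fin n → WithBot ℝ) :
    cdot q y ≤ cdot q x + cdot x y := by
  rw [← cdot_add_const]
  exact Finset.sup_mono_fun fun j _ => add_le_add_right (le_add_cdot hx y j) _

lemma cdot_mulVec_le {x : Fin n → WithBot ℝ} (hx : Reg x) (A : Matrix (Fin n) (Fin n) (WithBot ℝ))
    (y : Fin n → WithBot ℝ) : cdot x (mulVec A y) ≤ cdot x (mulVec A x) + cdot x y := by
  rw [← cdot_add_const]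
  refine Finset.sup_mono_fun fun i _ => add_le_add_right ?_ _
  show _ ≤ mulVec A x i + cdot x y
  rw [← mulVec_add_const]
  exact mulVec_mono A (le_add_cdot hx y) i

lemma cdot_mulVec_tpow_le {x : Fin n → WithBot ℝ} (hx : Reg x)
    (A : Matrix (Fin n) (Fin n) (WithBot ℝ)) (k : ℕ) (y : Fin n → WithBot ℝ) :
    cdot x (mulVec (tpow A k) y) ≤ k • cdot x (mulVec A x) + cdot x y := by
  induction k with
  | zero => simp [tpow, mulVec_tId]
  | succ k ih =>
    calc cdot x (mulVec (tpow A (k + 1)) y)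
        ≤ cdot x (mulVec A x) + cdot x (mulVec (tpow A k) y) := by
          rw [mulVec_tpow_succ]; exact cdot_mulVec_le hx A _
      _ ≤ cdot x (mulVec A x) + (k • cdot x (mulVec A x) + cdot x y) := add_le_add_right ih _
      _ = (k + 1) • cdot x (mulVec A x) + cdot x y := by rw [succ_nsmul', add_assoc]

lemma ttr_le_cdot {x : Fin n → WithBot ℝ} (hx : Reg x) (M : Matrix (Fin n) (Fin n) (WithBot ℝ)) :
    ttr M ≤ cdot x (mulVec M x) := Finset.sup_le fun i _ =>
  calc M i i = tinv (x i) + (M i i + x i) := by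
        rw [add_left_comm, tinv_add_cancel (hx i), add_zero]
    _ ≤ cdot x (mulVec M x) := (add_le_add_right (add_le_mulVec M x i i) _).trans (le_cdot x _ i)

lemma specRad_le_cdot {x : Fin n → WithBot ℝ} (hx : Reg x)
    (A : Matrix (Fin n) (Fin n) (WithBot ℝ)) :
    specRad A ≤ cdot x (mulVec A x) := by
  refine Finset.sup_le fun m hm => (trt_le_iff (Finset.mem_Icc.1 hm).1).2 ?_
  calc ttr (tpow A m) ≤ cdot x (mulVec (tpow A m) x) := ttr_le_cdot hx _
    _ ≤ m • cdot x (mulVec A x) + cdot x x := cdot_mulVec_tpow_le hx A m x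
    _ ≤ m • cdot x (mulVec A x) := by simpa using add_le_add_right (cdot_self_le hx) _

def objective (A : Matrix (Fin n) (Fin n) (WithBot ℝ)) (q p : Fin n → WithBot ℝ) (c : WithBot ℝ)
    (x : Fin n → WithBot ℝ) : WithBot ℝ :=
  cdot x (mulVec A x) ⊔ cdot x p ⊔ cdot q x ⊔ c

def minValue (A : Matrix (Fin n) (Fin n) (WithBot ℝ)) (q p : Fin n → WithBot ℝ) (c : WithBot ℝ) :
    WithBot ℝ :=
  specRad A ⊔ ((Finset.Icc 1 n).sup fun m => trt (cdot q (mulVec (tpow A (m - 1)) p)) (m + 1)) ⊔ c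

lemma minValue_le_objective (A : Matrix (Fin n) (Fin n) (WithBot ℝ)) (q p : Fin n → WithBot ℝ)
    (c : WithBot ℝ) {x : Fin n → WithBot ℝ} (hx : Reg x) :
    minValue A q p c ≤ objective A q p c x := by
  set θ := objective A q p c x
  have hA : cdot x (mulVec A x) ≤ θ := le_sup_left.trans (le_sup_left.trans le_sup_left)
  have hp : cdot x p ≤ θ := le_sup_right.trans (le_sup_left.trans le_sup_left)
  have hq : cdot q x ≤ θ := le_sup_right.trans le_sup_left
  refine sup_le (sup_le ((specRad_le_cdot hx A).trans hA) ?_) le_sup_right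
  refine Finset.sup_le fun m hm => (trt_le_iff m.succ_pos).2 ?_
  obtain ⟨k, rfl⟩ := Nat.exists_eq_add_of_le' (Finset.mem_Icc.1 hm).1
  calc cdot q (mulVec (tpow A (k + 1 - 1)) p)
      ≤ cdot q x + (k • cdot x (mulVec A x) + cdot x p) := by
        simpa using (cdot_le_cdot_add hx _ _).trans
          (add_le_add_right (cdot_mulVec_tpow_le hx A k p) _)
    _ ≤ θ + (k • θ + θ) := add_le_add hq (add_le_add (nsmul_le_nsmul_right hA k) hp)
    _ = (k + 1 + 1) • θ := by rw [succ_nsmul, succ_nsmul, add_comm θ, add_assoc]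

section KleeneStar

variable (B : Matrix (Fin n) (Fin n) (WithBot ℝ))

lemma tpow_succ_apply (m : ℕ) (i j : Fin n) :
    tpow B (m + 1) i j = Finset.univ.sup fun l => B i l + tpow B m l j := rfl

lemma tpow_add_le (a b : ℕ) (i k j : Fin n) :
    tpow B a i k + tpow B b k j ≤ tpow B (a + b) i j := by
  induction a generalizing i with
  | zero =>
    by_cases h : i = k
    · subst h; simp [tpow, tId]
    · simp [tpow, tId, h]
  | succ a ih =>
    rw [tpow_succ_apply, finsetSup_add, Nat.add_right_comm, tpow_succ_apply]
    exact Finset.sup_mono_fun fun l _ => by rw [add_assoc]; exact add_le_add_right (ih l) _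

lemma tpow_le_kstar_of_lt {m : ℕ} (hm : m < n) (i j : Fin n) : tpow B m i j ≤ kstar B i j :=
  Finset.le_sup (f := fun k => tpow B k i j) (Finset.mem_range.2 hm)

lemma zero_le_kstar_self (i : Fin n) : 0 ≤ kstar B i i :=
  le_of_eq_of_le (by simp [tpow, tId]) (tpow_le_kstar_of_lt B i.pos i i)

lemma mulVec_kstar_apply (x : Fin n → WithBot ℝ) (i : Fin n) :
    mulVec (kstar B) x i = (Finset.range n).sup fun t => mulVec (tpow B t) x i := by
  simp only [mulVec, kstar, finsetSup_add]
  exact Finset.sup_comm _ _ _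

lemma le_mulVec_kstar (x : Fin n → WithBot ℝ) (i : Fin n) : x i ≤ mulVec (kstar B) x i :=
  calc x i ≤ kstar B i i + x i := le_add_of_nonneg_left (zero_le_kstar_self B i)
    _ ≤ mulVec (kstar B) x i := add_le_mulVec _ x i i

def walkWeight (w : ℕ → Fin n) (a b : ℕ) : WithBot ℝ :=
  ∑ k ∈ Finset.Ico a b, B (w k) (w (k + 1))

lemma walkWeight_le_tpow (w : ℕ → Fin n) {a b : ℕ} (hab : a ≤ b) :
    walkWeight B w a b ≤ tpow B (b - a) (w a) (w b) := by
  obtain ⟨m, rfl⟩ := Nat.exists_eq_add_of_le hab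
  rw [Nat.add_sub_cancel_left]
  clear hab
  induction m generalizing a with
  | zero => simp [walkWeight, tpow, tId]
  | succ m ih =>
    rw [walkWeight, Finset.sum_eq_sum_Ico_succ_bot (by omega), tpow_succ_apply]
    refine le_trans ?_ (Finset.le_sup (Finset.mem_univ (w (a + 1))))
    refine add_le_add_right ?_ _
    rw [show a + (m + 1) = a + 1 + m by omega]
    exact ih

lemma exists_walkWeight_eq_tpow {m : ℕ} {i j : Fin n} (h : tpow B m i j ≠ ⊥) :
    ∃ w : ℕ → Fin n, w 0 = i ∧ w m = j ∧ tpow B m i j = walkWeight B w 0 m := by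
  induction m generalizing i with
  | zero =>
    have hij : i = j := by by_contra hij; simp [tpow, tId, hij] at h
    exact ⟨fun _ => i, rfl, hij, by simp [hij, tpow, tId, walkWeight]⟩
  | succ m ih =>
    obtain ⟨l, -, hl⟩ := Finset.exists_mem_eq_sup Finset.univ ⟨i, Finset.mem_univ i⟩
      fun l => B i l + tpow B m l j
    rw [tpow_succ_apply, hl] at h ⊢
    obtain ⟨w, hw0, hwm, hw⟩ := ih (WithBot.add_ne_bot.1 h).2
    refine ⟨fun t => Nat.casesOn t i w, rfl, hwm, ?_⟩
    simp only [walkWeight, ← Finset.range_eq_Ico, Finset.sum_range_succ'] at hw ⊢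
    rw [hw, add_comm, hw0]
    rfl

lemma walkWeight_add (w : ℕ → Fin n) {a b c : ℕ} (hab : a ≤ b) (hbc : b ≤ c) :
    walkWeight B w a b + walkWeight B w b c = walkWeight B w a c :=
  Finset.sum_Ico_consecutive _ hab hbc

variable {B}

lemma tpow_card_le_kstar (hB : TrOp B ≤ 0) (i j : Fin n) : tpow B n i j ≤ kstar B i j := by
  by_cases hbot : tpow B n i j = ⊥
  · simp [hbot]
  obtain ⟨w, rfl, rfl, hw⟩ := exists_walkWeight_eq_tpow B hbot
  obtain ⟨a, b, hab, hbn, hwab⟩ : ∃ a b : ℕ, a < b ∧ b ≤ n ∧ w a = w b := by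
    obtain ⟨a, b, hne, he⟩ := Fintype.exists_ne_map_eq_of_card_lt (fun t : Fin (n + 1) => w t)
      (by simp)
    rcases lt_or_gt_of_ne (Fin.val_ne_of_ne hne) with h | h
    · exact ⟨a, b, h, Nat.lt_succ_iff.1 b.2, he⟩
    · exact ⟨b, a, h, Nat.lt_succ_iff.1 a.2, he.symm⟩
  have hcycle : walkWeight B w a b ≤ 0 := by
    refine (walkWeight_le_tpow B w hab.le).trans ?_
    rw [hwab]
    refine (Finset.le_sup (f := fun i => tpow B (b - a) i i) (Finset.mem_univ _)).trans ?_
    exact (Finset.le_sup (f := fun m => ttr (tpow B m))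
      (Finset.mem_Icc.2 ⟨by omega, by omega⟩)).trans hB
  calc tpow B n (w 0) (w n)
      = walkWeight B w 0 a + walkWeight B w a b + walkWeight B w b n := by
        rw [hw, walkWeight_add B w (Nat.zero_le a) hab.le,
          walkWeight_add B w (Nat.zero_le b) hbn]
    _ ≤ tpow B a (w 0) (w b) + 0 + tpow B (n - b) (w b) (w n) := by
        gcongr
        · simpa [hwab] using walkWeight_le_tpow B w (Nat.zero_le a)
        · exact walkWeight_le_tpow B w hbn
    _ ≤ tpow B (a + (n - b)) (w 0) (w n) := by
        rw [add_zero]; exact tpow_add_le B _ _ _ _ _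
    _ ≤ kstar B (w 0) (w n) := tpow_le_kstar_of_lt B (by omega) _ _

lemma tpow_le_kstar (hB : TrOp B ≤ 0) {m : ℕ} (hm : m ≤ n) (i j : Fin n) :
    tpow B m i j ≤ kstar B i j := by
  rcases hm.lt_or_eq with hm | rfl
  · exact tpow_le_kstar_of_lt B hm i j
  · exact tpow_card_le_kstar hB i j

lemma tmul_kstar_le (hB : TrOp B ≤ 0) (i j : Fin n) : tmul B (kstar B) i j ≤ kstar B i j := by
  have h : tmul B (kstar B) i j = (Finset.range n).sup fun t => tpow B (t + 1) i j := by
    simp only [tmul, kstar, add_finsetSup, tpow_succ_apply]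
    exact Finset.sup_comm _ _ _
  rw [h]
  exact Finset.sup_le fun t ht => tpow_le_kstar hB (Finset.mem_range.1 ht) i j

lemma mulVec_mulVec_kstar_le (hB : TrOp B ≤ 0) (u : Fin n → WithBot ℝ) (i : Fin n) :
    mulVec B (mulVec (kstar B) u) i ≤ mulVec (kstar B) u i := by
  rw [← mulVec_tmul]
  exact mulVec_mono_left (tmul_kstar_le hB) u i

lemma mulVec_kstar_eq_self {x : Fin n → WithBot ℝ} (hx : ∀ i, mulVec B x i ≤ x i) :
    mulVec (kstar B) x = x := by
  have hpow : ∀ t i, mulVec (tpow B t) x i ≤ x i := by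
    intro t
    induction t with
    | zero => simp [tpow, mulVec_tId]
    | succ t ih =>
      intro i
      rw [mulVec_tpow_succ]
      exact (mulVec_mono B ih i).trans (hx i)
  funext i
  refine le_antisymm ?_ (le_mulVec_kstar B x i)
  rw [mulVec_kstar_apply]
  exact Finset.sup_le fun t _ => hpow t i

end KleeneStar

def tsmul (t : WithBot ℝ) (A : Matrix (Fin n) (Fin n) (WithBot ℝ)) :
    Matrix (Fin n) (Fin n) (WithBot ℝ) := fun i j => t + A i j

lemma mulVec_tsmul (t : WithBot ℝ) (A : Matrix (Fin n) (Fin n) (WithBot ℝ))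
    (x : Fin n → WithBot ℝ) (i : Fin n) : mulVec (tsmul t A) x i = t + mulVec A x i := by
  simp only [mulVec, tsmul, add_finsetSup, add_assoc]

lemma tpow_tsmul (t : WithBot ℝ) (A : Matrix (Fin n) (Fin n) (WithBot ℝ)) (m : ℕ) (i j : Fin n) :
    tpow (tsmul t A) m i j = m • t + tpow A m i j := by
  induction m generalizing i with
  | zero => simp [tpow]
  | succ m ih =>
    simp only [tpow_succ_apply, ih, add_finsetSup, succ_nsmul']
    exact Finset.sup_congr rfl fun l _ => by simp only [tsmul]; abel

lemma TrOp_tsmul_tinv_nonpos {A : Matrix (Fin n) (Fin n) (WithBot ℝ)} {μ : WithBot ℝ} (hμ : μ ≠ ⊥)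
    (hA : specRad A ≤ μ) : TrOp (tsmul (tinv μ) A) ≤ 0 := by
  refine Finset.sup_le fun m hm => ?_
  have h : ttr (tpow A m) ≤ m • μ :=
    (trt_le_iff (Finset.mem_Icc.1 hm).1).1
      ((Finset.le_sup (f := fun m => trt (ttr (tpow A m)) m) hm).trans hA)
  calc ttr (tpow (tsmul (tinv μ) A) m) = m • tinv μ + ttr (tpow A m) := by
        simp only [ttr, tpow_tsmul, add_finsetSup]
    _ ≤ m • tinv μ + m • μ := add_le_add_right h _
    _ = 0 := by rw [← nsmul_add, tinv_add_cancel hμ, nsmul_zero]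

/-- The row vector `q⁻ M`. -/
def conjVecMul {m k : ℕ} (q : Fin m → WithBot ℝ) (M : Matrix (Fin m) (Fin k) (WithBot ℝ))
    (j : Fin k) : WithBot ℝ := Finset.univ.sup fun i => tinv (q i) + M i j

lemma cdot_mulVec {m k : ℕ} (q : Fin m → WithBot ℝ) (M : Matrix (Fin m) (Fin k) (WithBot ℝ))
    (u : Fin k → WithBot ℝ) :
    cdot q (mulVec M u) = Finset.univ.sup fun j => conjVecMul q M j + u j := by
  simp only [cdot, mulVec, conjVecMul, add_finsetSup, finsetSup_add, add_assoc]
  exact Finset.sup_comm _ _ _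

lemma conjVecMul_kstar_ne_bot {q : Fin n → WithBot ℝ} (hq : Reg q)
    (B : Matrix (Fin n) (Fin n) (WithBot ℝ)) (j : Fin n) : conjVecMul q (kstar B) j ≠ ⊥ := by
  have h : tinv (q j) + 0 ≤ conjVecMul q (kstar B) j :=
    (add_le_add_right (zero_le_kstar_self B j) _).trans
      (Finset.le_sup (f := fun i => tinv (q i) + kstar B i j) (Finset.mem_univ j))
  rw [add_zero] at h
  exact fun hbot => tinv_ne_bot (hq j) (le_bot_iff.1 (hbot ▸ h))

lemma objective_le_iff {A : Matrix (Fin n) (Fin n) (WithBot ℝ)} {q p : Fin n → WithBot ℝ}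
    {c μ : WithBot ℝ} (hq : Reg q) (hμ : μ ≠ ⊥) (hA : specRad A ≤ μ) (hc : c ≤ μ)
    {x : Fin n → WithBot ℝ} (hx : Reg x) :
    objective A q p c x ≤ μ ↔ ∃ u, x = mulVec (kstar (tsmul (tinv μ) A)) u ∧
      ∀ j, tinv μ + p j ≤ u j ∧ u j ≤ μ + tinv (conjVecMul q (kstar (tsmul (tinv μ) A)) j) := by
  set B := tsmul (tinv μ) A
  have hB : TrOp B ≤ 0 := TrOp_tsmul_tinv_nonpos hμ hA
  have hobj : objective A q p c x ≤ μ ↔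
      (∀ i, mulVec B x i ≤ x i) ∧ (∀ i, tinv μ + p i ≤ x i) ∧ cdot q x ≤ μ := by
    simp only [objective, sup_le_iff, hc, and_true, cdot_le_iff_tinv_add_le hx hμ, B,
      mulVec_tsmul, and_assoc]
  have hg : ∀ j (a : WithBot ℝ),
      a ≤ μ + tinv (conjVecMul q (kstar B) j) ↔ conjVecMul q (kstar B) j + a ≤ μ :=
    fun j a => by rw [add_comm μ, le_tinv_add_iff (conjVecMul_kstar_ne_bot hq B j)]
  rw [hobj]
  constructor
  · rintro ⟨hBx, hpx, hqx⟩
    have hfix := mulVec_kstar_eq_self hBx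
    refine ⟨x, hfix.symm, fun j => ⟨hpx j, (hg j _).2 ?_⟩⟩
    rw [← hfix, cdot_mulVec, Finset.sup_le_iff] at hqx
    exact hqx j (Finset.mem_univ j)
  · rintro ⟨u, rfl, hpu⟩
    refine ⟨mulVec_mulVec_kstar_le hB u, fun i => (hpu i).1.trans (le_mulVec_kstar B u i), ?_⟩
    rw [cdot_mulVec]
    exact Finset.sup_le fun j _ => (hg j _).1 (hpu j).2

lemma cdot_mulVec_tpow_le_minValue (A : Matrix (Fin n) (Fin n) (WithBot ℝ))
    (q p : Fin n → WithBot ℝ) (c : WithBot ℝ) {t : ℕ} (ht : t < n) :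
    cdot q (mulVec (tpow A t) p) ≤ (t + 2) • minValue A q p c := by
  have h := Finset.le_sup (f := fun m => trt (cdot q (mulVec (tpow A (m - 1)) p)) (m + 1))
    (Finset.mem_Icc.2 ⟨Nat.le_add_left 1 t, ht⟩)
  exact (trt_le_iff (by omega)).1 (h.trans (le_sup_right.trans le_sup_left))

lemma conjVecMul_kstar_add_le (A : Matrix (Fin n) (Fin n) (WithBot ℝ)) (q p : Fin n → WithBot ℝ)
    (c : WithBot ℝ) (hμ : minValue A q p c ≠ ⊥) (j : Fin n) :
    conjVecMul q (kstar (tsmul (tinv (minValue A q p c)) A)) j + p j ≤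
      minValue A q p c + minValue A q p c := by
  set μ := minValue A q p c
  simp only [conjVecMul, kstar, add_finsetSup, finsetSup_add]
  refine Finset.sup_le fun i _ => Finset.sup_le fun t ht => ?_
  have hq : tinv (q i) + (tpow A t i j + p j) ≤ (t + 2) • μ :=
    ((add_le_add_right (add_le_mulVec _ p i j) _).trans (le_cdot q _ i)).trans
      (cdot_mulVec_tpow_le_minValue A q p c (Finset.mem_range.1 ht))
  calc tinv (q i) + tpow (tsmul (tinv μ) A) t i j + p j
      = t • tinv μ + (tinv (q i) + (tpow A t i j + p j)) := by rw [tpow_tsmul]; abel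
    _ ≤ t • tinv μ + (t + 2) • μ := add_le_add_right hq _
    _ = μ + μ := by
        rw [add_nsmul, ← add_assoc, ← nsmul_add, tinv_add_cancel hμ, nsmul_zero, zero_add,
          two_nsmul]

lemma exists_objective_le_minValue (A : Matrix (Fin n) (Fin n) (WithBot ℝ))
    {q : Fin n → WithBot ℝ} (hq : Reg q) (p : Fin n → WithBot ℝ) (c : WithBot ℝ)
    (hμ : minValue A q p c ≠ ⊥) : ∃ x, Reg x ∧ objective A q p c x ≤ minValue A q p c := by
  set μ := minValue A q p c
  set B := tsmul (tinv μ) A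
  have hg := conjVecMul_kstar_ne_bot hq B
  set u : Fin n → WithBot ℝ := fun j => μ + tinv (conjVecMul q (kstar B) j)
  have hu : Reg u := fun j => WithBot.add_ne_bot.2 ⟨hμ, tinv_ne_bot (hg j)⟩
  have hx : Reg (mulVec (kstar B) u) := fun i hbot =>
    hu i (le_bot_iff.1 (hbot ▸ le_mulVec_kstar B u i))
  refine ⟨_, hx, (objective_le_iff hq hμ (le_sup_left.trans le_sup_left) le_sup_right hx).2
    ⟨u, rfl, fun j => ⟨?_, le_rfl⟩⟩⟩
  rw [tinv_add_le_iff hμ, ← add_assoc, add_comm, le_tinv_add_iff (hg j)]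
  exact conjVecMul_kstar_add_le A q p c hμ j

end MaxPlus

/-- unconstrained minimization of `x⁻ A x ⊕ x⁻ p ⊕ q⁻ x ⊕ c`. -/
theorem stmt_11 {n : ℕ} (A : Matrix (Fin n) (Fin n) (WithBot ℝ))
    (hlam : ⊥ < specRad A)
    (q : Fin n → WithBot ℝ) (hq : Reg q)
    (p : Fin n → WithBot ℝ) (c : WithBot ℝ)
    (μ : WithBot ℝ)
    (hμ : μ = specRad A
        ⊔ ((Finset.Icc 1 n).sup fun m => trt (cdot q (mulVec (tpow A (m - 1)) p)) (m + 1))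
        ⊔ c) :
    IsLeast {v | ∃ x : Fin n → WithBot ℝ, Reg x ∧
        cdot x (mulVec A x) ⊔ cdot x p ⊔ cdot q x ⊔ c = v} μ ∧
      ∀ x : Fin n → WithBot ℝ, Reg x →
        (cdot x (mulVec A x) ⊔ cdot x p ⊔ cdot q x ⊔ c = μ ↔
          ∃ u : Fin n → WithBot ℝ,
            x = mulVec (kstar fun i j => tinv μ + A i j) u ∧
            ∀ j, tinv μ + p j ≤ u j ∧
              u j ≤ μ + tinv (Finset.univ.sup fun i =>
                tinv (q i) + kstar (fun a b => tinv μ + A a b) i j)) := by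
  obtain rfl : μ = minValue A q p c := hμ
  have hA : specRad A ≤ minValue A q p c := le_sup_left.trans le_sup_left
  have hμ : minValue A q p c ≠ ⊥ := (hlam.trans_le hA).ne'
  have hlower : ∀ x, Reg x → minValue A q p c ≤ objective A q p c x :=
    fun x hx => minValue_le_objective A q p c hx
  obtain ⟨x₀, hx₀, hx₀le⟩ := exists_objective_le_minValue A hq p c hμ
  refine ⟨⟨⟨x₀, hx₀, le_antisymm hx₀le (hlower x₀ hx₀)⟩, ?_⟩, fun x hx => ?_⟩
  · rintro v ⟨x, hx, rfl⟩
    exact hlower x hx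
  · exact (le_antisymm_iff.trans (and_iff_left (hlower x hx))).trans
      (objective_le_iff hq hμ hA le_sup_right hx)
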